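/- Let 𝒮 ⊆ 𝔹 support a spherical 2-design, and let O ∈ ℝ^{ℓ×ℓ} be an orthogonal matrix with O u_ℓ = u_ℓ. Then O ∈ ddi_𝔹(𝒮); that is, Oᵀ u_ℓ = u_ℓ, 𝒮 ⊆ O𝔹, and every N ∈ ℳ_𝔹(𝒮) (with n = ℓ) satisfies det(NᵀN) ≥ 1 = det(OᵀO). -/

import Mathlib

/-!
Given `N` consistent with `𝒮`, choose preimages `vᵢ ∈ 𝔹` of the design states, `N vᵢ = sᵢ`.
The matrix `A = ∑ pᵢ vᵢ vᵢᵀ` is positive semidefinite with `tr A ≤ ∑ pᵢ = 1`, so AM-GM on its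
eigenvalues gives `det A ≤ ℓ⁻ˡ`. On the other hand `N A Nᵀ = ∑ pᵢ sᵢ sᵢᵀ = ℓ⁻¹ I`, so
`det (Nᵀ N) · det A = ℓ⁻ˡ`, forcing `det (Nᵀ N) ≥ 1`. An orthogonal `O` fixing `uₗ` maps `𝔹`
onto itself and has `det (Oᵀ O) = 1`, so it attains this bound.
-/

open Matrix

/-- The ball `𝔹` of states: vectors on the hyperplane `uₗ ⬝ v = 1` with norm at most one. -/
def stateBall (ℓ : ℕ) : Set (Fin ℓ → ℝ) :=
  {v | (1 : Fin ℓ → ℝ) ⬝ᵥ v = 1 ∧ v ⬝ᵥ v ≤ 1}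

/-- The set `ℳ_𝕊(𝒬)` of quasi-measurements from `𝕊` consistent with `𝒬` (case `n = ℓ`). -/
def consistentSet {ℓ : ℕ} (𝕊 𝒬 : Set (Fin ℓ → ℝ)) : Set (Matrix (Fin ℓ) (Fin ℓ) ℝ) :=
  {M | Mᵀ *ᵥ (1 : Fin ℓ → ℝ) = (1 : Fin ℓ → ℝ) ∧ 𝒬 ⊆ (fun v => M *ᵥ v) '' 𝕊}

open Finset

theorem Real.prod_le_sum_div_card_pow {ι : Type*} (s : Finset ι) {f : ι → ℝ}
    (hf : ∀ i ∈ s, 0 ≤ f i) : ∏ i ∈ s, f i ≤ ((∑ i ∈ s, f i) / #s) ^ #s := by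
  rcases s.eq_empty_or_nonempty with rfl | hs
  · simp
  have hcard : (#s : ℝ) ≠ 0 := by exact_mod_cast hs.card_pos.ne'
  have amgm := Real.geom_mean_le_arith_mean_weighted s (fun _ => (#s : ℝ)⁻¹) f
    (fun _ _ => inv_nonneg.mpr (#s).cast_nonneg) (by simp [hcard]) hf
  rw [Real.finsetProd_rpow s f hf, ← Finset.mul_sum, inv_mul_eq_div] at amgm
  calc ∏ i ∈ s, f i = ((∏ i ∈ s, f i) ^ (#s : ℝ)⁻¹) ^ #s :=
        (Real.rpow_inv_natCast_pow (prod_nonneg hf) hs.card_pos.ne').symm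
    _ ≤ _ := pow_le_pow_left₀ (Real.rpow_nonneg (prod_nonneg hf) _) amgm _

namespace Matrix

variable {n ι : Type*} [Fintype n] [Fintype ι]

theorem PosSemidef.det_le_trace_div_card_pow [DecidableEq n] {A : Matrix n n ℝ}
    (hA : A.PosSemidef) :
    A.det ≤ (A.trace / Fintype.card n) ^ Fintype.card n := by
  rw [hA.isHermitian.det_eq_prod_eigenvalues, hA.isHermitian.trace_eq_sum_eigenvalues]
  simpa using Real.prod_le_sum_div_card_pow univ fun i _ => hA.eigenvalues_nonneg i

theorem posSemidef_sum_smul_vecMulVec_self {p : ι → ℝ} (hp : ∀ i, 0 ≤ p i) (v : ι → n → ℝ) :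
    (∑ i, p i • vecMulVec (v i) (v i)).PosSemidef :=
  posSemidef_sum _ fun i _ => by simpa using (posSemidef_vecMulVec_self_star (v i)).smul (hp i)

theorem trace_sum_smul_vecMulVec_self_le_one {p : ι → ℝ} (hp : ∀ i, 0 ≤ p i)
    (hpsum : ∑ i, p i = 1) {v : ι → n → ℝ} (hv : ∀ i, v i ⬝ᵥ v i ≤ 1) :
    (∑ i, p i • vecMulVec (v i) (v i)).trace ≤ 1 := by
  simp only [trace_sum, trace_smul, trace_vecMulVec, smul_eq_mul]
  calc ∑ i, p i * (v i ⬝ᵥ v i) ≤ ∑ i, p i :=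
        sum_le_sum fun i _ => mul_le_of_le_one_right (hp i) (hv i)
    _ = 1 := hpsum

theorem mul_sum_smul_vecMulVec_self_mul_transpose (N : Matrix n n ℝ) (p : ι → ℝ)
    (v : ι → n → ℝ) :
    N * (∑ i, p i • vecMulVec (v i) (v i)) * Nᵀ =
      ∑ i, p i • vecMulVec (N *ᵥ v i) (N *ᵥ v i) := by
  simp only [Finset.mul_sum, Finset.sum_mul, mul_smul_comm, smul_mul_assoc, mul_vecMulVec,
    vecMulVec_mul, vecMul_transpose]

theorem one_le_det_transpose_mul_of_mulVec_eq_design [DecidableEq n] (N : Matrix n n ℝ)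
    {p : ι → ℝ} {v s : ι → n → ℝ} (hp : ∀ i, 0 ≤ p i) (hpsum : ∑ i, p i = 1)
    (hv : ∀ i, v i ⬝ᵥ v i ≤ 1) (hNv : ∀ i, N *ᵥ v i = s i)
    (hdesign : ∑ i, p i • vecMulVec (s i) (s i) = (Fintype.card n : ℝ)⁻¹ • 1) :
    1 ≤ (Nᵀ * N).det := by
  set m := Fintype.card n
  set A := ∑ i, p i • vecMulVec (v i) (v i)
  have hA : A.PosSemidef := posSemidef_sum_smul_vecMulVec_self hp v
  have hc : 0 < ((m : ℝ)⁻¹) ^ m := by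
    rcases Nat.eq_zero_or_pos m with hm | hm
    · simp [hm]
    · positivity
  have hdetA : A.det ≤ ((m : ℝ)⁻¹) ^ m := by
    refine hA.det_le_trace_div_card_pow.trans (pow_le_pow_left₀ ?_ ?_ m)
    · exact div_nonneg hA.trace_nonneg m.cast_nonneg
    · simpa only [one_div] using div_le_div_of_nonneg_right
        (trace_sum_smul_vecMulVec_self_le_one hp hpsum hv) m.cast_nonneg
  have hconj : N.det * A.det * N.det = ((m : ℝ)⁻¹) ^ m := by
    have := congrArg det (mul_sum_smul_vecMulVec_self_mul_transpose N p v)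
    simpa only [hNv, hdesign, det_mul, det_transpose, det_smul, det_one, mul_one] using this
  rw [det_mul, det_transpose]
  nlinarith [hA.det_nonneg, mul_self_nonneg N.det]

end Matrix

theorem stateBall_subset_image_mulVec {ℓ : ℕ} {O : Matrix (Fin ℓ) (Fin ℓ) ℝ}
    (hO : O * Oᵀ = 1) (hOu : O *ᵥ (1 : Fin ℓ → ℝ) = 1) :
    stateBall ℓ ⊆ (fun v => O *ᵥ v) '' stateBall ℓ := by
  rintro x ⟨hxu, hxx⟩
  refine ⟨Oᵀ *ᵥ x, ⟨?_, ?_⟩, by simp only [mulVec_mulVec, hO, one_mulVec]⟩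
  · rw [dotProduct_mulVec, vecMul_transpose, hOu, hxu]
  · rwa [dotProduct_mulVec, vecMul_transpose, mulVec_mulVec, hO, one_mulVec]

theorem stmt1_general (ℓ : ℕ)
    (𝒮 : Set (Fin ℓ → ℝ)) (h𝒮 : 𝒮 ⊆ stateBall ℓ)
    (k : ℕ) (s : Fin k → (Fin ℓ → ℝ)) (p : Fin k → ℝ)
    (hs : ∀ i, s i ∈ 𝒮)
    (hp : ∀ i, 0 ≤ p i) (hpsum : ∑ i, p i = 1)
    (hdesign : ∑ i, p i • vecMulVec (s i) (s i) = (ℓ : ℝ)⁻¹ • (1 : Matrix (Fin ℓ) (Fin ℓ) ℝ))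
    (O : Matrix (Fin ℓ) (Fin ℓ) ℝ) (hO : Oᵀ * O = 1)
    (hOu : O *ᵥ (1 : Fin ℓ → ℝ) = (1 : Fin ℓ → ℝ)) :
    (Oᵀ *ᵥ (1 : Fin ℓ → ℝ) = (1 : Fin ℓ → ℝ) ∧ 𝒮 ⊆ (fun v => O *ᵥ v) '' stateBall ℓ) ∧
      (Oᵀ * O).det = 1 ∧
      ∀ N ∈ consistentSet (stateBall ℓ) 𝒮, 1 ≤ (Nᵀ * N).det := by
  refine ⟨⟨?_, h𝒮.trans (stateBall_subset_image_mulVec (mul_eq_one_comm.mp hO) hOu)⟩,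
    by rw [hO, det_one], ?_⟩
  · calc Oᵀ *ᵥ 1 = Oᵀ *ᵥ (O *ᵥ 1) := by rw [hOu]
      _ = 1 := by rw [mulVec_mulVec, hO, one_mulVec]
  · rintro N ⟨-, hN𝒮⟩
    choose v hv hNv using fun i => hN𝒮 (hs i)
    exact one_le_det_transpose_mul_of_mulVec_eq_design N hp hpsum (fun i => (hv i).2) hNv
      (by rwa [Fintype.card_fin])

/-- If `𝒮 ⊆ 𝔹` supports a spherical 2-design and `O` is an orthogonal
matrix fixing the all-ones vector, then `O` belongs to the output of the data-driven
inference map `ddi_𝔹(𝒮)`: it is consistent with `𝒮`, `det (Oᵀ O) = 1`, and every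
quasi-measurement `N` consistent with `𝒮` on the ball satisfies `det (Nᵀ N) ≥ 1`. -/
theorem stmt1 (ℓ : ℕ) (hℓ : 0 < ℓ)
    (𝒮 : Set (Fin ℓ → ℝ)) (h𝒮 : 𝒮 ⊆ stateBall ℓ)
    (k : ℕ) (s : Fin k → (Fin ℓ → ℝ)) (p : Fin k → ℝ)
    (hs : ∀ i, s i ∈ 𝒮)
    (hpure : ∀ i, (1 : Fin ℓ → ℝ) ⬝ᵥ s i = 1 ∧ s i ⬝ᵥ s i = 1)
    (hp : ∀ i, 0 ≤ p i) (hpsum : ∑ i, p i = 1)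
    (hdesign : ∑ i, p i • vecMulVec (s i) (s i) = (ℓ : ℝ)⁻¹ • (1 : Matrix (Fin ℓ) (Fin ℓ) ℝ))
    (O : Matrix (Fin ℓ) (Fin ℓ) ℝ) (hO : Oᵀ * O = 1)
    (hOu : O *ᵥ (1 : Fin ℓ → ℝ) = (1 : Fin ℓ → ℝ)) :
    (Oᵀ *ᵥ (1 : Fin ℓ → ℝ) = (1 : Fin ℓ → ℝ) ∧ 𝒮 ⊆ (fun v => O *ᵥ v) '' stateBall ℓ) ∧
      (Oᵀ * O).det = 1 ∧
      ∀ N ∈ consistentSet (stateBall ℓ) 𝒮, 1 ≤ (Nᵀ * N).det :=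
  stmt1_general ℓ 𝒮 h𝒮 k s p hs hp hpsum hdesign O hO hOu
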